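/- Let φ ∈ End(ℝ²) and consider the Poisson bivector P = X_φ ∧ ∂/∂x₃ on ℝ³, where X_φ is the linear vector field of φ. Then the Hamiltonian vector fields are P_{x₁} = −φ(x₁)·∂/∂x₃, P_{x₂} = −φ(x₂)·∂/∂x₃, and P_{x₃} = X_φ; consequently the symplectic leaves are either the preimages under the projection ℝ³ → ℝ² of trajectories of X_φ in ℝ² ∖ ker φ, or single points of the subspace ker φ ⊕ ⟨x₃⟩. -/
import Mathlib


open MvPolynomial

noncomputable section

/-- Extension of φ ∈ End(ℝ²) to a 3×3 matrix acting on the (x₁,x₂)-coordinates. -/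
def phi3 (φ : Matrix (Fin 2) (Fin 2) ℝ) : Matrix (Fin 3) (Fin 3) ℝ :=
  Matrix.of fun i j =>
    if hi : (i : ℕ) < 2 then if hj : (j : ℕ) < 2 then φ ⟨i, hi⟩ ⟨j, hj⟩ else 0 else 0

/-- Components of the linear vector field X_φ = φ_a^b x_b ∂_a on ℝ³ (zero ∂₃-part). -/
def Xphi (φ : Matrix (Fin 2) (Fin 2) ℝ) : Fin 3 → MvPolynomial (Fin 3) ℝ :=
  fun i => ∑ j, C (phi3 φ i j) * X j

/-- Components of the Poisson bivector P = X_φ ∧ ∂/∂x₃ on ℝ³. -/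
def Pcomp (φ : Matrix (Fin 2) (Fin 2) ℝ) : Fin 3 → Fin 3 → MvPolynomial (Fin 3) ℝ :=
  fun i j => Xphi φ i * (if j = 2 then 1 else 0) - Xphi φ j * (if i = 2 then 1 else 0)

/-- The Hamiltonian vector field P_f = −i_{df}P of f: its i-th component. -/
def Ham (φ : Matrix (Fin 2) (Fin 2) ℝ) (f : MvPolynomial (Fin 3) ℝ) :
    Fin 3 → MvPolynomial (Fin 3) ℝ :=
  fun i => - ∑ j, pderiv j f * Pcomp φ j i

lemma Xphi2 (φ : Matrix (Fin 2) (Fin 2) ℝ) : Xphi φ 2 = 0 := by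
  simp [Xphi, phi3, Fin.sum_univ_three]

lemma ham_X (φ : Matrix (Fin 2) (Fin 2) ℝ) (k i : Fin 3) :
    Ham φ (X k) i = - Pcomp φ k i := by
  have : ∀ j : Fin 3, pderiv j (X k : MvPolynomial (Fin 3) ℝ) = if j = k then 1 else 0 := by
    intro j; rw [pderiv_X]; by_cases h : j = k <;> simp [h, Pi.single_apply]
  fin_cases k <;> simp [Ham, Fin.sum_univ_three, this]

lemma ham_X0 (φ : Matrix (Fin 2) (Fin 2) ℝ) (i : Fin 3) :
    Ham φ (X 0) i = if i = 2 then -Xphi φ 0 else 0 := by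
  rw [ham_X]; fin_cases i <;> simp [Pcomp, Xphi2]

lemma ham_X1 (φ : Matrix (Fin 2) (Fin 2) ℝ) (i : Fin 3) :
    Ham φ (X 1) i = if i = 2 then -Xphi φ 1 else 0 := by
  rw [ham_X]; fin_cases i <;> simp [Pcomp, Xphi2]

lemma ham_X2 (φ : Matrix (Fin 2) (Fin 2) ℝ) (i : Fin 3) :
    Ham φ (X 2) i = Xphi φ i := by
  rw [ham_X]; fin_cases i <;> simp [Pcomp, Xphi2]

lemma eval_ham (φ : Matrix (Fin 2) (Fin 2) ℝ) (p : Fin 3 → ℝ) (f : MvPolynomial (Fin 3) ℝ)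
    (i : Fin 3) :
    eval p (Ham φ f i) = eval p (pderiv 2 f) * eval p (Xphi φ i)
      - (if i = 2 then eval p (pderiv 0 f) * eval p (Xphi φ 0)
            + eval p (pderiv 1 f) * eval p (Xphi φ 1) else 0) := by
  have h2 := Xphi2 φ
  fin_cases i <;> simp [Ham, Pcomp, Fin.sum_univ_three, h2]

lemma mulVec0 (φ : Matrix (Fin 2) (Fin 2) ℝ) (p : Fin 3 → ℝ) :
    φ.mulVec ![p 0, p 1] 0 = eval p (Xphi φ 0) := by
  simp [Xphi, phi3, Fin.sum_univ_three, Matrix.mulVec, dotProduct, Fin.sum_univ_two]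

lemma mulVec1 (φ : Matrix (Fin 2) (Fin 2) ℝ) (p : Fin 3 → ℝ) :
    φ.mulVec ![p 0, p 1] 1 = eval p (Xphi φ 1) := by
  simp [Xphi, phi3, Fin.sum_univ_three, Matrix.mulVec, dotProduct, Fin.sum_univ_two]


/-- for P = X_φ ∧ ∂₃ on ℝ³ the Hamiltonian vector fields are
P_{x₁} = −φ(x₁)·∂₃, P_{x₂} = −φ(x₂)·∂₃ and P_{x₃} = X_φ; consequently the symplectic
leaves (orbits of the distribution spanned by the Hamiltonian fields) are: at points p
over ker φ all Hamiltonian fields vanish (single-point leaves of ker φ ⊕ ⟨x₃⟩), while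
at points p with X_φ(p) ≠ 0 the distribution is spanned by X_φ(p) and ∂₃, i.e. the
leaves are preimages of the trajectories of X_φ under the projection ℝ³ → ℝ². -/
theorem stmt19 (φ : Matrix (Fin 2) (Fin 2) ℝ) :
    (∀ i, Ham φ (X 0) i = if i = 2 then -Xphi φ 0 else 0) ∧
    (∀ i, Ham φ (X 1) i = if i = 2 then -Xphi φ 1 else 0) ∧
    (∀ i, Ham φ (X 2) i = Xphi φ i) ∧
    (∀ p : Fin 3 → ℝ,
      ((φ.mulVec ![p 0, p 1] = 0) ↔
        ∀ (f : MvPolynomial (Fin 3) ℝ) (i : Fin 3), eval p (Ham φ f i) = 0) ∧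
      (φ.mulVec ![p 0, p 1] ≠ 0 →
        Submodule.span ℝ
            {w : Fin 3 → ℝ | ∃ f : MvPolynomial (Fin 3) ℝ, w = fun i => eval p (Ham φ f i)}
          = Submodule.span ℝ
              {(fun i => eval p (Xphi φ i)), (Pi.single 2 1 : Fin 3 → ℝ)})) := by
  refine ⟨ham_X0 φ, ham_X1 φ, ham_X2 φ, fun p => ?_⟩
  have hv2 : eval p (Xphi φ 2) = 0 := by rw [Xphi2]; simp
  constructor
  · constructor
    · intro h f i
      have h0 : eval p (Xphi φ 0) = 0 := by rw [← mulVec0, h]; rfl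
      have h1 : eval p (Xphi φ 1) = 0 := by rw [← mulVec1, h]; rfl
      rw [eval_ham]
      fin_cases i <;> simp [h0, h1, hv2]
    · intro h
      funext i
      fin_cases i
      · show φ.mulVec ![p 0, p 1] 0 = 0
        rw [mulVec0, ← ham_X2 φ 0]; exact h (X 2) 0
      · show φ.mulVec ![p 0, p 1] 1 = 0
        rw [mulVec1, ← ham_X2 φ 1]; exact h (X 2) 1
  · intro hne
    set v : Fin 3 → ℝ := fun i => eval p (Xphi φ i) with hv
    have hvS : v ∈ Submodule.span ℝ
        {w : Fin 3 → ℝ | ∃ f : MvPolynomial (Fin 3) ℝ, w = fun i => eval p (Ham φ f i)} := by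
      apply Submodule.subset_span
      exact ⟨X 2, by funext i; rw [ham_X2]⟩
    have hone : eval p (Xphi φ 0) ≠ 0 ∨ eval p (Xphi φ 1) ≠ 0 := by
      by_contra hc
      push_neg at hc
      apply hne
      funext i
      fin_cases i
      · show φ.mulVec ![p 0, p 1] 0 = 0
        rw [mulVec0]; exact hc.1
      · show φ.mulVec ![p 0, p 1] 1 = 0
        rw [mulVec1]; exact hc.2
    have heS : (Pi.single 2 1 : Fin 3 → ℝ) ∈ Submodule.span ℝ
        {w : Fin 3 → ℝ | ∃ f : MvPolynomial (Fin 3) ℝ, w = fun i => eval p (Ham φ f i)} := by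
      rcases hone with h0 | h0
      · have hw : (fun i => eval p (Ham φ (X 0) i)) ∈ Submodule.span ℝ
            {w : Fin 3 → ℝ | ∃ f : MvPolynomial (Fin 3) ℝ, w = fun i => eval p (Ham φ f i)} :=
          Submodule.subset_span ⟨X 0, rfl⟩
        have := Submodule.smul_mem _ (-(eval p (Xphi φ 0)))⁻¹ hw
        convert this using 1
        funext i
        fin_cases i <;> simp [ham_X0, Pi.single_apply]
        field_simp
      · have hw : (fun i => eval p (Ham φ (X 1) i)) ∈ Submodule.span ℝ
            {w : Fin 3 → ℝ | ∃ f : MvPolynomial (Fin 3) ℝ, w = fun i => eval p (Ham φ f i)} :=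
          Submodule.subset_span ⟨X 1, rfl⟩
        have := Submodule.smul_mem _ (-(eval p (Xphi φ 1)))⁻¹ hw
        convert this using 1
        funext i
        fin_cases i <;> simp [ham_X1, Pi.single_apply]
        field_simp
    apply le_antisymm
    · rw [Submodule.span_le]
      rintro w ⟨f, rfl⟩
      rw [SetLike.mem_coe, Submodule.mem_span_pair]
      refine ⟨eval p (pderiv 2 f),
        -(eval p (pderiv 0 f) * eval p (Xphi φ 0) + eval p (pderiv 1 f) * eval p (Xphi φ 1)), ?_⟩
      funext i
      fin_cases i <;>
        simp [eval_ham, Pi.single_apply, hv] <;> ring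
    · rw [Submodule.span_le]
      rintro w hw
      simp only [Set.mem_insert_iff, Set.mem_singleton_iff] at hw
      rcases hw with rfl | rfl
      · exact hvS
      · exact heS

end
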